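/- In a purely polarized variety, every polar term is a zero term. -/
import Mathlib


structure Alg (Ω : Type) (ar : Ω → ℕ) : Type 1 where
  carrier : Type
  interp : ∀ ω : Ω, (Fin (ar ω) → carrier) → carrier

inductive Term (Ω : Type) (ar : Ω → ℕ) (X : Type) : Type
  | var : X → Term Ω ar X
  | op : (ω : Ω) → (Fin (ar ω) → Term Ω ar X) → Term Ω ar X

variable {Ω : Type} {ar : Ω → ℕ} {X Y : Type}

def Term.eval (A : Alg Ω ar) (v : X → A.carrier) : Term Ω ar X → A.carrier
  | .var x => v x
  | .op ω ts => A.interp ω fun i => (ts i).eval A v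

def Term.subst (σ : X → Term Ω ar Y) : Term Ω ar X → Term Ω ar Y
  | .var x => σ x
  | .op ω ts => .op ω fun i => (ts i).subst σ

def Term.varSet : Term Ω ar X → Set X
  | .var x => {x}
  | .op _ ts => ⋃ i, (ts i).varSet

def Satisfies (A : Alg Ω ar) (p q : Term Ω ar X) : Prop :=
  ∀ v : X → A.carrier, p.eval A v = q.eval A v

/-- `V ⊨ p = q` for a class of algebras `V`. -/
def VSat (V : Alg Ω ar → Prop) (p q : Term Ω ar X) : Prop :=
  ∀ A, V A → Satisfies A p q

/-- `p` is a term idempotent of `V`: `V ⊨ ω(p,…,p) = p` for every basic operation `ω`. -/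
def TermIdem (V : Alg Ω ar → Prop) (p : Term Ω ar X) : Prop :=
  ∀ ω : Ω, VSat V (Term.op ω fun _ => p) p

/-- `V` is a term idempotent variety: both sides of every nontrivial identity it
satisfies are term idempotents of `V`. -/
def TermIdemVariety (V : Alg Ω ar → Prop) : Prop :=
  ∀ p q : Term Ω ar ℕ, VSat V p q → p ≠ q → TermIdem V p ∧ TermIdem V q

def Models (A : Alg Ω ar) (E : Set (Term Ω ar ℕ × Term Ω ar ℕ)) : Prop :=
  ∀ e ∈ E, Satisfies A e.1 e.2

/-- The variety (equational class) defined by the set of identities `E`. -/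
def VarietyOf (E : Set (Term Ω ar ℕ × Term Ω ar ℕ)) : Alg Ω ar → Prop :=
  fun A => Models A E

structure IsCongr (A : Alg Ω ar) (r : A.carrier → A.carrier → Prop) : Prop where
  refl : ∀ a, r a a
  symm : ∀ {a b}, r a b → r b a
  trans : ∀ {a b c}, r a b → r b c → r a c
  compat : ∀ (ω : Ω) (f g : Fin (ar ω) → A.carrier),
    (∀ i, r (f i) (g i)) → r (A.interp ω f) (A.interp ω g)

/-- Quotient algebra of `A` by a (congruence) relation `r`. -/
noncomputable def Alg.quot (A : Alg Ω ar) (r : A.carrier → A.carrier → Prop) : Alg Ω ar where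
  carrier := Quot r
  interp := fun ω f => Quot.mk r (A.interp ω fun i => (f i).out)

/-- `r` is the `W`-replica congruence of `A`: the smallest congruence whose quotient lies in `W`. -/
def IsReplica (W : Alg Ω ar → Prop) (A : Alg Ω ar) (r : A.carrier → A.carrier → Prop) : Prop :=
  IsCongr A r ∧ W (A.quot r) ∧
    ∀ s : A.carrier → A.carrier → Prop, IsCongr A s → W (A.quot s) →
      ∀ a b, r a b → s a b

/-- The `r`-class of `a` is a subalgebra of `A`. -/
def ClassIsSub (A : Alg Ω ar) (r : A.carrier → A.carrier → Prop) (a : A.carrier) : Prop :=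
  ∀ (ω : Ω) (f : Fin (ar ω) → A.carrier), (∀ i, r (f i) a) → r (A.interp ω f) a

/-- The `r`-class of `a` viewed as an algebra. -/
def classAlg (A : Alg Ω ar) (r : A.carrier → A.carrier → Prop) (a : A.carrier)
    (h : ClassIsSub A r a) : Alg Ω ar where
  carrier := {b : A.carrier // r b a}
  interp := fun ω f => ⟨A.interp ω fun i => (f i).1, h ω _ fun i => (f i).2⟩

/-- The Mal'tsev product `V ∘ W`. -/
def MalProd (V W : Alg Ω ar → Prop) (A : Alg Ω ar) : Prop :=
  ∀ r : A.carrier → A.carrier → Prop, IsReplica W A r →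
    ∀ (a : A.carrier) (h : ClassIsSub A r a), V (classAlg A r a h)

structure Hom (A B : Alg Ω ar) where
  toFun : A.carrier → B.carrier
  map : ∀ ω f, toFun (A.interp ω f) = B.interp ω fun i => toFun (f i)

def IsIdem (A : Alg Ω ar) (a : A.carrier) : Prop :=
  ∀ ω : Ω, A.interp ω (fun _ => a) = a

/-- `u` is a constant term of `V`: `V ⊨ u(x₁,…,xₙ) = u(y₁,…,yₙ)`. -/
def ConstTerm {Ω : Type} {ar : Ω → ℕ} (V : Alg Ω ar → Prop) (u : Term Ω ar ℕ) : Prop :=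
  VSat V (u.subst fun n => .var (2 * n)) (u.subst fun n => .var (2 * n + 1))

/-- A polar term of `V`: a constant unary term idempotent. -/
def IsPolar {Ω : Type} {ar : Ω → ℕ} (V : Alg Ω ar → Prop) (p : Term Ω ar ℕ) : Prop :=
  p.varSet ⊆ {0} ∧ ConstTerm V p ∧ TermIdem V p

/-- A zero term of `V`: a constant term `p` with
`V ⊨ ω(x₁,…,x_{i-1}, p(x), x_{i+1},…,xₙ) = p(x)` for all `ω` and positions `i`. -/
def IsZeroTerm {Ω : Type} {ar : Ω → ℕ} (V : Alg Ω ar → Prop) (p : Term Ω ar ℕ) : Prop :=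
  p.varSet ⊆ {0} ∧ ConstTerm V p ∧
  ∀ (ω : Ω) (i : Fin (ar ω)),
    VSat V (Term.op ω fun j => if j = i then p else .var (j.1 + 1)) p


theorem Term.eval_subst (A : Alg Ω ar) (σ : X → Term Ω ar Y) (v : Y → A.carrier)
    (t : Term Ω ar X) :
    (t.subst σ).eval A v = t.eval A fun x => (σ x).eval A v := by
  induction t with
  | var x => rfl
  | op ω ts ih => simp only [Term.subst, Term.eval, ih]

theorem Term.varSet_nonempty (hτ : ∀ ω, 0 < ar ω) (t : Term Ω ar X) :
    t.varSet.Nonempty := by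
  induction t with
  | var x => exact ⟨x, rfl⟩
  | op ω ts ih =>
    obtain ⟨x, hx⟩ := ih ⟨0, hτ ω⟩
    exact ⟨x, Set.mem_iUnion.2 ⟨_, hx⟩⟩

theorem Term.varSet_subst_const (t : Term Ω ar ℕ) :
    (t.subst fun _ => (.var 1 : Term Ω ar ℕ)).varSet ⊆ {1} := by
  induction t with
  | var x => simp [Term.subst, Term.varSet]
  | op ω ts ih =>
    intro x hx
    simp only [Term.subst, Term.varSet, Set.mem_iUnion] at hx
    obtain ⟨i, hi⟩ := hx
    exact ih i hi

/-- in a purely polarized variety every polar term is a zero term. -/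
theorem stmt_18 {Ω : Type} {ar : Ω → ℕ} (hτ : ∀ ω, 0 < ar ω)
    (V : Alg Ω ar → Prop)
    (hpp : (∃ q : Term Ω ar ℕ, IsPolar V q) ∧ TermIdemVariety V)
    (p : Term Ω ar ℕ) (hp : IsPolar V p) :
    IsZeroTerm V p := by
  obtain ⟨hvar, hconst, hidemp⟩ := hp
  -- semantic constancy of p
  have hc : ∀ A, V A → ∀ v w : ℕ → A.carrier, p.eval A v = p.eval A w := by
    intro A hA v w
    have h := hconst A hA (fun m => if m % 2 = 0 then v (m / 2) else w (m / 2))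
    rw [Term.eval_subst, Term.eval_subst] at h
    have e1 : (fun n => (Term.var (2 * n) : Term Ω ar ℕ).eval A
        (fun m => if m % 2 = 0 then v (m / 2) else w (m / 2))) = v := by
      funext n
      have h1 : (2 * n) % 2 = 0 := by omega
      have h2 : (2 * n) / 2 = n := by omega
      simp [Term.eval, h1, h2]
    have e2 : (fun n => (Term.var (2 * n + 1) : Term Ω ar ℕ).eval A
        (fun m => if m % 2 = 0 then v (m / 2) else w (m / 2))) = w := by
      funext n
      have h1 : ¬ ((2 * n + 1) % 2 = 0) := by omega
      have h2 : (2 * n + 1) / 2 = n := by omega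
      simp [Term.eval, h1, h2]
    rw [e1, e2] at h
    exact h
  refine ⟨hvar, hconst, ?_⟩
  intro ω i
  set p' : Term Ω ar ℕ := p.subst fun _ => .var 1 with hp'def
  set s : Term Ω ar ℕ := Term.op ω fun j => if j = i then p else .var (j.1 + 1) with hsdef
  set s' : Term Ω ar ℕ := Term.op ω fun j => if j = i then p' else .var (j.1 + 1) with hs'def
  -- p' evaluates like p
  have hp'eval : ∀ A, V A → ∀ v : ℕ → A.carrier, p'.eval A v = p.eval A v := by
    intro A hA v
    rw [hp'def, Term.eval_subst]
    exact hc A hA _ _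
  -- V ⊨ s = s'
  have hss' : VSat V s s' := by
    intro A hA v
    simp only [hsdef, hs'def, Term.eval]
    congr 1
    funext j
    by_cases hj : j = i
    · simp [hj, (hp'eval A hA v).symm]
    · simp [hj]
  -- s ≠ s'
  have hne : s ≠ s' := by
    intro h
    rw [hsdef, hs'def] at h
    have hfun : (fun j => if j = i then p else (.var (j.1 + 1) : Term Ω ar ℕ))
        = (fun j => if j = i then p' else .var (j.1 + 1)) := by
      injection h
    have hpi : p = p' := by
      have := congrFun hfun i
      simpa using this
    obtain ⟨x, hx⟩ := Term.varSet_nonempty hτ p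
    have hx0 : x = 0 := hvar hx
    subst hx0
    rw [hpi] at hx
    have : (0 : ℕ) ∈ ({1} : Set ℕ) := Term.varSet_subst_const p hx
    simp at this
  -- s is a term idempotent
  have hsid : TermIdem V s := (hpp.2 s s' hss' hne).1
  -- every term with all variables replaced by s evaluates like s
  have key : ∀ t : Term Ω ar ℕ, ∀ A, V A → ∀ v : ℕ → A.carrier,
      (t.subst fun _ => s).eval A v = s.eval A v := by
    intro t
    induction t with
    | var x => intro A hA v; rfl
    | op ω' ts ih =>
      intro A hA v
      have h1 : (Term.op ω' fun _ => s).eval A v = s.eval A v := hsid ω' A hA v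
      calc ((Term.op ω' ts).subst fun _ => s).eval A v
          = A.interp ω' (fun j => ((ts j).subst fun _ => s).eval A v) := rfl
        _ = A.interp ω' (fun _ => s.eval A v) := by
            congr 1; funext j; exact ih j A hA v
        _ = s.eval A v := h1
  -- conclude: s ≈ p
  intro A hA v
  have h1 := key p A hA v
  rw [Term.eval_subst] at h1
  have h2 : p.eval A (fun _ => s.eval A v) = p.eval A v := hc A hA _ _
  exact h1.symm.trans h2
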